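/- Let b⁽¹⁾ be a loop drive of even length 2N₁ in ℝ³ (Σ_{n=1}^{2N₁} (−1)^{n+1} b⁽¹⁾_n = 0) and let b⁽²⁾ be any drive of even length 2N₂ in ℝ³. Then the concatenated drive b = b⁽¹⁾ ⌢ b⁽²⁾ of length 2(N₁+N₂) satisfies S(b) = S(b⁽¹⁾) + S(b⁽²⁾). In particular, if b⁽²⁾ is also a loop drive, then b is a loop drive whose characteristic reciprocal lattice vector is the sum of those of b⁽¹⁾ and b⁽²⁾. -/

import Mathlib

open Matrix Finset

/-- The displacement vector after `n` steps of a 3D exchange drive: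
`d_n = Σ_{k=1}^{n} (−1)^{k+1} b_k`. -/
noncomputable def disp3 (b : ℕ → Fin 3 → ℝ) (n : ℕ) : Fin 3 → ℝ :=
  ∑ k ∈ Finset.Icc 1 n, (-1 : ℝ) ^ (k + 1) • b k

/-- The characteristic sum `S(b) = Σ_{n=1}^{2N−1} (−1)ⁿ (d_n × b_{n+1})` of a 3D
exchange drive of length `2N`. -/
noncomputable def charSum (N : ℕ) (b : ℕ → Fin 3 → ℝ) : Fin 3 → ℝ :=
  ∑ n ∈ Finset.Icc 1 (2 * N - 1), (-1 : ℝ) ^ n • ((disp3 b n) ⨯₃ (b (n + 1)))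

/-! Each term `(−1)ⁿ d_n × b_{n+1}` of the characteristic sum depends only on the displacement
`d_n` and the next step. After a loop of even length the displacement is back at `0` and the sign
pattern is unchanged, so from then on the terms of the concatenated drive are exactly those of the
second drive. Since the term with `d₀ = 0` vanishes, `S(b)` may be summed over `0 ≤ n < 2N`, and
this range splits additively at `2N₁`. -/

theorem sum_Icc_one_eq_sum_range {M : Type*} [AddCommMonoid M] (f : ℕ → M) (n : ℕ) :
    ∑ k ∈ Icc 1 n, f k = ∑ k ∈ range n, f (k + 1) := by
  rw [← Ico_add_one_right_eq_Icc, sum_Ico_eq_sum_range, Nat.add_sub_cancel]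
  simp only [add_comm]

theorem disp3_zero (b : ℕ → Fin 3 → ℝ) : disp3 b 0 = 0 := by
  simp [disp3]

theorem disp3_congr {b b' : ℕ → Fin 3 → ℝ} {n : ℕ}
    (h : ∀ k, 1 ≤ k → k ≤ n → b k = b' k) : disp3 b n = disp3 b' n :=
  sum_congr rfl fun k hk => by rw [h k (mem_Icc.1 hk).1 (mem_Icc.1 hk).2]

theorem disp3_two_mul_add (b : ℕ → Fin 3 → ℝ) (a n : ℕ) :
    disp3 b (2 * a + n) = disp3 b (2 * a) + disp3 (fun k => b (2 * a + k)) n := by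
  simp only [disp3, sum_Icc_one_eq_sum_range, sum_range_add, pow_add, pow_mul, neg_one_sq,
    one_pow, one_mul, add_assoc]

noncomputable def charTerm (b : ℕ → Fin 3 → ℝ) (n : ℕ) : Fin 3 → ℝ :=
  (-1 : ℝ) ^ n • (disp3 b n ⨯₃ b (n + 1))

theorem charTerm_zero (b : ℕ → Fin 3 → ℝ) : charTerm b 0 = 0 := by
  simp [charTerm, disp3_zero]

theorem charTerm_congr {b b' : ℕ → Fin 3 → ℝ} {n : ℕ}
    (h : ∀ k, 1 ≤ k → k ≤ n + 1 → b k = b' k) : charTerm b n = charTerm b' n := by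
  rw [charTerm, charTerm, disp3_congr fun k hk₁ hk₂ => h k hk₁ (by omega),
    h (n + 1) (by omega) le_rfl]

theorem charTerm_two_mul_add_of_disp3_eq_zero {b : ℕ → Fin 3 → ℝ} {a : ℕ}
    (hloop : disp3 b (2 * a) = 0) (n : ℕ) :
    charTerm b (2 * a + n) = charTerm (fun k => b (2 * a + k)) n := by
  rw [charTerm, charTerm, disp3_two_mul_add, hloop, zero_add, pow_add, pow_mul, neg_one_sq,
    one_pow, one_mul, add_assoc]

theorem charSum_eq_sum_range (N : ℕ) (b : ℕ → Fin 3 → ℝ) :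
    charSum N b = ∑ n ∈ range (2 * N), charTerm b n := by
  rcases Nat.eq_zero_or_pos N with rfl | hN
  · simp [charSum]
  · obtain ⟨m, hm⟩ : ∃ m, 2 * N = m + 1 := ⟨2 * N - 1, by omega⟩
    rw [charSum, hm, Nat.add_sub_cancel, sum_range_succ', charTerm_zero, add_zero,
      sum_Icc_one_eq_sum_range]
    rfl

theorem charSum_congr {N : ℕ} {b b' : ℕ → Fin 3 → ℝ}
    (h : ∀ k, 1 ≤ k → k ≤ 2 * N → b k = b' k) : charSum N b = charSum N b' := by
  simp only [charSum_eq_sum_range]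
  exact sum_congr rfl fun n hn =>
    charTerm_congr fun k hk₁ hk₂ => h k hk₁ (by rw [mem_range] at hn; omega)

theorem charSum_add_of_disp3_eq_zero {b : ℕ → Fin 3 → ℝ} {a : ℕ}
    (hloop : disp3 b (2 * a) = 0) (N : ℕ) :
    charSum (a + N) b = charSum a b + charSum N (fun k => b (2 * a + k)) := by
  simp only [charSum_eq_sum_range, mul_add, sum_range_add,
    charTerm_two_mul_add_of_disp3_eq_zero hloop]

/-- If `b⁽¹⁾` is a loop drive of length `2N₁` and `b⁽²⁾` is any drive of
length `2N₂`, then the concatenated drive `b = b⁽¹⁾ ⌢ b⁽²⁾` of length `2(N₁+N₂)`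
satisfies `S(b) = S(b⁽¹⁾) + S(b⁽²⁾)`; in particular if `b⁽²⁾` is also a loop drive then
`b` is a loop drive whose characteristic reciprocal lattice vector is the sum of those
of `b⁽¹⁾` and `b⁽²⁾`. -/
theorem stmt_8 (N₁ N₂ : ℕ) (b₁ b₂ b : ℕ → Fin 3 → ℝ)
    (hloop₁ : ∑ n ∈ Finset.Icc 1 (2 * N₁), (-1 : ℝ) ^ (n + 1) • b₁ n = 0)
    (hcat₁ : ∀ n, 1 ≤ n → n ≤ 2 * N₁ → b n = b₁ n)
    (hcat₂ : ∀ n, 2 * N₁ < n → b n = b₂ (n - 2 * N₁)) :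
    charSum (N₁ + N₂) b = charSum N₁ b₁ + charSum N₂ b₂
    ∧ ((∑ n ∈ Finset.Icc 1 (2 * N₂), (-1 : ℝ) ^ (n + 1) • b₂ n = 0) →
        ∑ n ∈ Finset.Icc 1 (2 * (N₁ + N₂)), (-1 : ℝ) ^ (n + 1) • b n = 0) := by
  have hloop : disp3 b (2 * N₁) = 0 := (disp3_congr hcat₁).trans hloop₁
  have hshift : ∀ k, 1 ≤ k → b (2 * N₁ + k) = b₂ k := fun k hk => by
    rw [hcat₂ _ (by omega), Nat.add_sub_cancel_left]
  refine ⟨?_, fun hloop₂ => ?_⟩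
  · rw [charSum_add_of_disp3_eq_zero hloop, charSum_congr hcat₁,
      charSum_congr fun k hk _ => hshift k hk]
  · change disp3 b (2 * (N₁ + N₂)) = 0
    rw [mul_add, disp3_two_mul_add, hloop, zero_add, disp3_congr fun k hk _ => hshift k hk]
    exact hloop₂
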